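/- For any natural numbers r > k ≥ 0, there exists a polynomial P of degree at most k such that A_{r,k}^2(x) = P(x^2)·(1-x^2)^{2r-2k-1} for all real x, where A_{r,k}^2(x) = Q_{r-k-1}(x)^2 (1-x^2)/(2(2r-2k-1)) - Σ_{n=r-k}^{r-1} Q_n^{(n+k-r)}(x)^2 (n+1/2) and Q_n(x) = (1-x^2)^n/(2^n n!). -/

import Mathlib

/-!
For `s ≤ n`, induction on `s` shows that the `s`-th derivative of `(1 - X²)ⁿ` is `(1 - X²)ⁿ⁻ˢ`
times a polynomial with the parity of `s`; that cofactor has degree `≤ s` because the derivative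
has degree `≤ 2n - s`. Hence the square of the derivative is `(1 - X²)^(2(n - s)) · b(X²)` with
`deg b ≤ s`. In the summands of `A2 r k` we have `n - s = r - k` and `s ≤ k - 1`, so one factor
`1 - x²` can be moved into `b`, keeping its degree `≤ k`; the first term is a constant multiple of
`(1 - x²)^(2r - 2k - 1)`.
-/

open Polynomial

noncomputable def Q (n : ℕ) : ℝ → ℝ := fun x => (1 - x^2)^n / (2^n * n.factorial)

noncomputable def A2 (r k : ℕ) : ℝ → ℝ := fun x =>
  (Q (r-k-1) x)^2 * (1 - x^2) / (2 * (2*(r:ℝ) - 2*k - 1)) -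
    ∑ n ∈ Finset.Icc (r-k) (r-1), (iteratedDeriv (n+k-r) (Q n) x)^2 * ((n:ℝ) + 1/2)

namespace Polynomial

variable {R : Type*} [CommRing R]

theorem derivative_comp_X_sq (a : R[X]) :
    derivative (a.comp (X ^ 2)) = C 2 * X * (derivative a).comp (X ^ 2) := by
  rw [derivative_comp, derivative_X_pow]
  simp only [map_ofNat, Nat.cast_ofNat]
  ring

theorem derivative_one_sub_X_sq_pow_succ_mul (m : ℕ) (p : R[X]) :
    derivative ((1 - X ^ 2) ^ (m + 1) * p) =
      (1 - X ^ 2) ^ m * ((1 - X ^ 2) * derivative p - C (2 * (m + 1 : R)) * X * p) := by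
  simp only [derivative_mul, derivative_pow, derivative_sub, derivative_one, derivative_X,
    map_mul, map_add, map_natCast, map_one, map_ofNat]
  push_cast
  ring

theorem exists_iterate_derivative_one_sub_X_sq_pow {n s : ℕ} (hs : s ≤ n) :
    ∃ a : R[X], derivative^[s] ((1 - X ^ 2) ^ n) =
      (1 - X ^ 2) ^ (n - s) * (X ^ (s % 2) * a.comp (X ^ 2)) := by
  induction s with
  | zero => exact ⟨1, by simp⟩
  | succ s ih =>
    obtain ⟨a, ha⟩ := ih (by omega)
    obtain ⟨m, hm⟩ : ∃ m, n - s = m + 1 := ⟨n - s - 1, by omega⟩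
    rw [Function.iterate_succ_apply', ha, hm, derivative_one_sub_X_sq_pow_succ_mul,
      show n - (s + 1) = m by omega]
    rcases Nat.even_or_odd' s with ⟨t, rfl | rfl⟩
    · refine ⟨C 2 * (1 - X) * derivative a - C (2 * (m + 1 : R)) * a, ?_⟩
      rw [show 2 * t % 2 = 0 by omega, show (2 * t + 1) % 2 = 1 by omega]
      simp only [pow_zero, one_mul, pow_one, derivative_comp_X_sq, sub_comp, mul_comp, C_comp,
        one_comp, X_comp]
      ring
    · refine ⟨(1 - X) * (a + C 2 * X * derivative a) - C (2 * (m + 1 : R)) * X * a, ?_⟩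
      rw [show (2 * t + 1) % 2 = 1 by omega, show (2 * t + 1 + 1) % 2 = 0 by omega]
      simp only [pow_zero, one_mul, pow_one, derivative_mul, derivative_X, derivative_comp_X_sq,
        sub_comp, mul_comp, add_comp, C_comp, one_comp, X_comp]
      ring

variable [IsDomain R]

theorem natDegree_one_sub_X_sq : (1 - X ^ 2 : R[X]).natDegree = 2 := by
  compute_degree!

theorem natDegree_le_of_iterate_derivative_one_sub_X_sq_pow_eq {n s : ℕ} {p : R[X]}
    (h : derivative^[s] ((1 - X ^ 2) ^ n) = (1 - X ^ 2) ^ (n - s) * p) (hs : s ≤ n) :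
    p.natDegree ≤ s := by
  rcases eq_or_ne p 0 with rfl | hp
  · simp
  have hne : (1 - X ^ 2 : R[X]) ≠ 0 := ne_zero_of_natDegree_gt (n := 0) (by
    rw [natDegree_one_sub_X_sq]; omega)
  have hle := natDegree_iterate_derivative ((1 - X ^ 2 : R[X]) ^ n) s
  rw [h, natDegree_mul (pow_ne_zero _ hne) hp, natDegree_pow, natDegree_pow,
    natDegree_one_sub_X_sq] at hle
  omega

theorem exists_sq_iterate_derivative_one_sub_X_sq_pow {n s : ℕ} (hs : s ≤ n) :
    ∃ b : R[X], b.natDegree ≤ s ∧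
      (derivative^[s] ((1 - X ^ 2) ^ n)) ^ 2 = (1 - X ^ 2) ^ (2 * (n - s)) * b.comp (X ^ 2) := by
  obtain ⟨a, ha⟩ := exists_iterate_derivative_one_sub_X_sq_pow (R := R) hs
  set p := X ^ (s % 2) * a.comp (X ^ 2)
  have hsq : p ^ 2 = (X ^ (s % 2) * a ^ 2).comp (X ^ 2) := by
    simp only [p, mul_comp, pow_comp, X_comp]
    ring
  refine ⟨X ^ (s % 2) * a ^ 2, ?_, by rw [ha, mul_pow, ← pow_mul, hsq, mul_comm (n - s)]⟩
  have hdeg := congrArg natDegree hsq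
  rw [natDegree_pow, natDegree_comp, natDegree_X_pow] at hdeg
  have := natDegree_le_of_iterate_derivative_one_sub_X_sq_pow_eq ha hs
  omega

theorem iteratedDeriv_eval {𝕜 : Type*} [NontriviallyNormedField 𝕜] (p : 𝕜[X]) (s : ℕ) :
    iteratedDeriv s (fun x => p.eval x) = fun x => (derivative^[s] p).eval x := by
  induction s with
  | zero => simp
  | succ s ih =>
    rw [iteratedDeriv_succ, ih, Function.iterate_succ_apply']
    funext x
    exact Polynomial.deriv _

end Polynomial

noncomputable def evalSqMulWeight (N : ℕ) : ℝ[X] →ₗ[ℝ] ℝ → ℝ where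
  toFun P x := P.eval (x ^ 2) * (1 - x ^ 2) ^ N
  map_add' P P' := by ext x; simp [add_mul]
  map_smul' c P := by ext x; simp [mul_assoc]

noncomputable def evenWeighted (k N : ℕ) : Submodule ℝ (ℝ → ℝ) :=
  (degreeLE ℝ k).map (evalSqMulWeight N)

theorem mem_evenWeighted {k N : ℕ} {f : ℝ → ℝ} :
    f ∈ evenWeighted k N ↔
      ∃ P : ℝ[X], P.natDegree ≤ k ∧ ∀ x, f x = P.eval (x ^ 2) * (1 - x ^ 2) ^ N := by
  simp only [evenWeighted, Submodule.mem_map, mem_degreeLE, ← natDegree_le_iff_degree_le,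
    funext_iff, evalSqMulWeight, LinearMap.coe_mk, AddHom.coe_mk, eq_comm]

theorem evenWeighted_mono {k k' : ℕ} (h : k ≤ k') (N : ℕ) :
    evenWeighted k N ≤ evenWeighted k' N :=
  Submodule.map_mono (degreeLE_mono (by exact_mod_cast h))

theorem evenWeighted_succ_le (k N : ℕ) : evenWeighted k (N + 1) ≤ evenWeighted (k + 1) N := by
  intro f hf
  obtain ⟨P, hP, hf⟩ := mem_evenWeighted.1 hf
  refine mem_evenWeighted.2 ⟨(1 - X) * P, ?_, fun x => ?_⟩
  · have : (1 - X : ℝ[X]).natDegree ≤ 1 := by compute_degree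
    exact natDegree_mul_le.trans (by omega)
  · simp only [hf, eval_mul, eval_sub, eval_one, eval_X]
    ring

theorem mul_one_sub_sq_mem_evenWeighted {k N : ℕ} {f : ℝ → ℝ} (hf : f ∈ evenWeighted k N) :
    (fun x => f x * (1 - x ^ 2)) ∈ evenWeighted k (N + 1) := by
  obtain ⟨P, hP, hf⟩ := mem_evenWeighted.1 hf
  exact mem_evenWeighted.2 ⟨P, hP, fun x => by rw [hf, pow_succ (1 - x ^ 2), mul_assoc]⟩

theorem Q_eq_eval (n : ℕ) :
    Q n = fun x => (C ((2 ^ n * n.factorial : ℝ)⁻¹) * (1 - X ^ 2) ^ n).eval x := by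
  funext x
  simp [Q, div_eq_mul_inv, mul_comm]

theorem sq_iteratedDeriv_Q_mem_evenWeighted {n s : ℕ} (hs : s ≤ n) :
    (fun x => iteratedDeriv s (Q n) x ^ 2) ∈ evenWeighted s (2 * (n - s)) := by
  obtain ⟨b, hb, hsq⟩ := exists_sq_iterate_derivative_one_sub_X_sq_pow (R := ℝ) hs
  set c : ℝ := (2 ^ n * n.factorial)⁻¹
  refine mem_evenWeighted.2 ⟨C (c ^ 2) * b, natDegree_C_mul_le _ _ |>.trans hb, fun x => ?_⟩
  rw [Q_eq_eval, iteratedDeriv_eval, iterate_derivative_C_mul]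
  dsimp only
  rw [eval_mul, eval_C, mul_pow, ← eval_pow, hsq]
  simp only [eval_mul, eval_pow, eval_comp, eval_C, eval_sub, eval_one, eval_X]
  ring

theorem A2_eq (r k : ℕ) :
    A2 r k = (2 * (2 * (r : ℝ) - 2 * k - 1))⁻¹ • (fun x => Q (r - k - 1) x ^ 2 * (1 - x ^ 2)) -
      ∑ n ∈ Finset.Icc (r - k) (r - 1),
        ((n : ℝ) + 1 / 2) • fun x => iteratedDeriv (n + k - r) (Q n) x ^ 2 := by
  funext x
  simp only [A2, Pi.sub_apply, Pi.smul_apply, Finset.sum_apply, smul_eq_mul]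
  congr 1
  · ring
  · exact Finset.sum_congr rfl fun n _ => mul_comm _ _

theorem stmt19 (r k : ℕ) (hrk : k < r) :
    ∃ P : Polynomial ℝ, P.degree ≤ k ∧
      ∀ x : ℝ, A2 r k x = P.eval (x^2) * (1 - x^2)^(2*r - 2*k - 1) := by
  suffices h : A2 r k ∈ evenWeighted k (2 * r - 2 * k - 1) by
    obtain ⟨P, hP, hA⟩ := mem_evenWeighted.1 h
    exact ⟨P, natDegree_le_iff_degree_le.1 hP, hA⟩
  rw [A2_eq]
  refine Submodule.sub_mem _ (Submodule.smul_mem _ _ ?_) (Submodule.sum_mem _ fun n hn => ?_)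
  · have hQ := mul_one_sub_sq_mem_evenWeighted
      (sq_iteratedDeriv_Q_mem_evenWeighted (Nat.zero_le (r - k - 1)))
    rw [iteratedDeriv_zero, show 2 * (r - k - 1 - 0) + 1 = 2 * r - 2 * k - 1 by omega] at hQ
    exact evenWeighted_mono (Nat.zero_le k) _ hQ
  · obtain ⟨hrn, hnr⟩ := Finset.mem_Icc.1 hn
    have hterm := sq_iteratedDeriv_Q_mem_evenWeighted (show n + k - r ≤ n by omega)
    rw [show 2 * (n - (n + k - r)) = 2 * r - 2 * k - 1 + 1 by omega] at hterm
    exact Submodule.smul_mem _ _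
      (evenWeighted_mono (by omega) _ (evenWeighted_succ_le _ _ hterm))
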